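/- With the notation above, for k = 2m (m >= 1) and q >= 1 the total degree of the Riley polynomial phi_{2m,q}(s,y) of J(2m,2q) equals (2m+1)q - 1. -/

import Mathlib

noncomputable section

/-- The ring of Laurent polynomials in `s` and ordinary polynomials in `y`
over `ℂ`, i.e. `ℂ[s^{±1}, y]`. -/
abbrev R2 : Type := AddMonoidAlgebra ℂ (ℤ × ℕ)

/-- The variable `s`. -/
def s : R2 := AddMonoidAlgebra.single (1, 0) 1
/-- The inverse variable `s⁻¹`. -/
def sInv : R2 := AddMonoidAlgebra.single (-1, 0) 1
/-- The variable `y`. -/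
def y : R2 := AddMonoidAlgebra.single (0, 1) 1

/-- `A = [[s,1],[0,s⁻¹]]`. -/
def A : Matrix (Fin 2) (Fin 2) R2 := !![s, 1; 0, sInv]
/-- `B = [[s,0],[-y,s⁻¹]]`. -/
def B : Matrix (Fin 2) (Fin 2) R2 := !![s, 0; -y, sInv]


/-- The total degree of a Laurent polynomial in `s` and `y`. -/
def deg (f : R2) : WithBot ℤ := f.coeff.support.sup fun p => ((p.1 + (p.2 : ℤ)) : WithBot ℤ)

/-!
Both `C = B A⁻¹` and `D = B⁻¹ A` have determinant `1` and trace `t = y + 2`, so by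
Cayley–Hamilton `C ^ m = a C - b` and `D ^ m = a D - b`, where `a = S_{m-1}(t)` and
`b = S_{m-2}(t)` are values of the Chebyshev polynomials `S`. Expanding `W = C ^ m D ^ m` and
using `a² + b² - t a b = 1` gives `tr W = 2 - a² y E` and `φ(W) = 1 + a (a - b) E` with
`E = s² + s⁻² - y - 2`. The total degree is additive on products (compare leading monomials in
the degree-lexicographic order), `deg a = m - 1 > deg b` and `deg E = 2`, hence
`deg (tr W) = 2m + 1` and `deg φ(W) = 2m`. Finally `φ(W ^ (q+1)) = tr W · φ(W ^ q) - φ(W ^ (q-1))`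
by Cayley–Hamilton for `W`, and the first term dominates, so every step adds `2m + 1`.
-/

open Polynomial AddMonoidAlgebra

section SpecialLinear

variable {R : Type*} [CommRing R]

theorem Matrix.sq_eq_trace_smul_sub_one {M : Matrix (Fin 2) (Fin 2) R} (hM : M.det = 1) :
    M ^ 2 = M.trace • M - 1 := by
  nontriviality R
  have h := M.aeval_self_charpoly
  rw [Matrix.charpoly_fin_two, hM] at h
  simp only [map_add, map_one, aeval_sub, map_pow, aeval_X, map_mul, aeval_C,
    Algebra.algebraMap_eq_smul_one, Algebra.smul_mul_assoc, one_mul] at h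
  rw [← sub_eq_zero, ← h]
  abel

theorem Matrix.pow_add_two_of_det_eq_one {M : Matrix (Fin 2) (Fin 2) R} (hM : M.det = 1)
    (n : ℕ) : M ^ (n + 2) = M.trace • M ^ (n + 1) - M ^ n := by
  rw [pow_add, Matrix.sq_eq_trace_smul_sub_one hM, mul_sub, Matrix.mul_smul, mul_one, pow_succ]

theorem Matrix.pow_succ_eq_chebyshev_S {M : Matrix (Fin 2) (Fin 2) R} (hM : M.det = 1)
    (n : ℕ) :
    M ^ (n + 1) =
      (Chebyshev.S R n).eval M.trace • M - (Chebyshev.S R (n - 1)).eval M.trace • 1 := by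
  induction n with
  | zero => simp
  | succ n ih =>
    rw [pow_succ, ih, sub_mul, smul_mul_assoc, ← sq, Matrix.sq_eq_trace_smul_sub_one hM,
      smul_mul_assoc, one_mul, Nat.cast_succ, add_sub_cancel_right, Chebyshev.S_add_one]
    simp only [eval_sub, eval_mul, eval_X]
    module

theorem Matrix.pow_succ_mul_pow_succ_of_trace_eq {M N : Matrix (Fin 2) (Fin 2) R}
    (hM : M.det = 1) (hN : N.det = 1) (htr : N.trace = M.trace) (n : ℕ) :
    M ^ (n + 1) * N ^ (n + 1) =
      (Chebyshev.S R n).eval M.trace ^ 2 • (M * N) -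
        ((Chebyshev.S R n).eval M.trace * (Chebyshev.S R (n - 1)).eval M.trace) • (M + N) +
        (Chebyshev.S R (n - 1)).eval M.trace ^ 2 • 1 := by
  rw [Matrix.pow_succ_eq_chebyshev_S hM, Matrix.pow_succ_eq_chebyshev_S hN, htr]
  simp only [sub_mul, mul_sub, Matrix.smul_mul, Matrix.mul_smul, smul_smul, one_mul, mul_one]
  module

end SpecialLinear

def degLex (p : ℤ × ℕ) : ℤ ×ₗ ℤ := toLex (p.1 + p.2, p.2)

lemma degLex_add (p q : ℤ × ℕ) : degLex (p + q) = degLex p + degLex q := by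
  simp only [degLex, Prod.fst_add, Prod.snd_add, Nat.cast_add, ← toLex_add, Prod.mk_add_mk]
  congr 2; ring

lemma degLex_injective : Function.Injective degLex := by
  intro p q h
  simp only [degLex, toLex_inj, Prod.mk.injEq, Nat.cast_inj] at h
  ext <;> omega

lemma deg_eq_of_isMaxOn {f : R2} {a : ℤ × ℕ} (ha : a ∈ f.coeff.support)
    (hmax : IsMaxOn degLex f.coeff.support a) : deg f = ((a.1 + a.2 : ℤ) : WithBot ℤ) := by
  refine supDegree_eq_of_isMaxOn ha fun b hb => WithBot.coe_le_coe.2 ?_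
  rcases Prod.Lex.le_iff.1 (hmax hb) with h | h
  exacts [h.le, h.1.le]

lemma deg_mul (f g : R2) : deg (f * g) = deg f + deg g := by
  rcases eq_or_ne f 0 with rfl | hf
  · simp [deg]
  rcases eq_or_ne g 0 with rfl | hg
  · simp [deg]
  obtain ⟨a, ha, hamax⟩ := f.coeff.support.exists_max_image degLex
    (Finsupp.support_nonempty_iff.2 (by simpa using hf))
  obtain ⟨b, hb, hbmax⟩ := g.coeff.support.exists_max_image degLex
    (Finsupp.support_nonempty_iff.2 (by simpa using hg))
  have hunique : UniqueAdd f.coeff.support g.coeff.support a b := by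
    intro a' b' ha' hb' he
    have := congrArg degLex he
    rw [degLex_add, degLex_add] at this
    obtain ⟨h1, h2⟩ := (add_eq_add_iff_eq_and_eq (hamax a' ha') (hbmax b' hb')).1 this
    exact ⟨degLex_injective h1, degLex_injective h2⟩
  have hab : a + b ∈ (f * g).coeff.support := by
    rw [Finsupp.mem_support_iff, coeff_mul_add_of_uniqueAdd hunique]
    exact mul_ne_zero (Finsupp.mem_support_iff.1 ha) (Finsupp.mem_support_iff.1 hb)
  refine le_antisymm (supDegree_mul_le fun p q => ?_) ?_
  · simp only [Prod.fst_add, Prod.snd_add]; push_cast; abel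
  · rw [deg_eq_of_isMaxOn ha hamax, deg_eq_of_isMaxOn hb hbmax, ← WithBot.coe_add]
    refine (WithBot.coe_le_coe.2 (le_of_eq ?_)).trans (Finset.le_sup hab)
    simp only [Prod.fst_add, Prod.snd_add]; push_cast; ring

lemma deg_single (p : ℤ × ℕ) {c : ℂ} (hc : c ≠ 0) :
    deg (single p c) = ((p.1 + p.2 : ℤ) : WithBot ℤ) :=
  supDegree_single_ne_zero p hc

lemma deg_s : deg s = ((1 : ℤ) : WithBot ℤ) := deg_single _ one_ne_zero

lemma deg_sInv : deg sInv = ((-1 : ℤ) : WithBot ℤ) := deg_single _ one_ne_zero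

lemma deg_y : deg y = ((1 : ℤ) : WithBot ℤ) := deg_single _ one_ne_zero

lemma deg_natCast (n : ℕ) [NeZero n] : deg (n : R2) = ((0 : ℤ) : WithBot ℤ) := by
  rw [natCast_def, deg_single _ (by exact_mod_cast NeZero.ne n)]; rfl

lemma deg_ofNat (n : ℕ) [n.AtLeastTwo] : deg (OfNat.ofNat n : R2) = ((0 : ℤ) : WithBot ℤ) := by
  rw [← Nat.cast_ofNat]; exact deg_natCast n

lemma deg_one : deg 1 = ((0 : ℤ) : WithBot ℤ) := by exact_mod_cast deg_natCast 1

lemma deg_mul_of_eq {f g : R2} {a b : ℤ} (hf : deg f = a) (hg : deg g = b) :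
    deg (f * g) = ↑(a + b) := by
  rw [deg_mul, hf, hg, WithBot.coe_add]

lemma deg_pow_of_eq {f : R2} {a : ℤ} (hf : deg f = a) (n : ℕ) : deg (f ^ n) = ↑(n * a) := by
  induction n with
  | zero => rw [pow_zero, deg_one]; simp
  | succ n ih => rw [pow_succ, deg_mul_of_eq ih hf]; congr 1; push_cast; ring

lemma deg_neg (f : R2) : deg (-f) = deg f := supDegree_neg

lemma deg_add_eq_left {f g : R2} (h : deg g < deg f) : deg (f + g) = deg f :=
  supDegree_add_eq_left h

lemma deg_add_eq_right {f g : R2} (h : deg f < deg g) : deg (f + g) = deg g :=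
  supDegree_add_eq_right h

lemma deg_sub_eq_left {f g : R2} (h : deg g < deg f) : deg (f - g) = deg f := by
  rw [sub_eq_add_neg]; exact deg_add_eq_left (by rwa [deg_neg])

lemma deg_sub_eq_right {f g : R2} (h : deg f < deg g) : deg (f - g) = deg g := by
  rw [sub_eq_add_neg, ← deg_neg g]; exact deg_add_eq_right (by rwa [deg_neg])

lemma deg_eq_of_recurrence {u : ℕ → R2} {T : R2} {t d : ℤ} (ht : 0 < t) (hT : deg T = t)
    (hu₁ : deg (u 1) = d) (hu₀ : deg (u 0) < ↑(d + t))
    (hrec : ∀ j, u (j + 2) = T * u (j + 1) - u j) (j : ℕ) :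
    deg (u (j + 1)) = ↑(d + j * t) := by
  suffices deg (u (j + 1)) = ↑(d + j * t) ∧ deg (u j) < ↑(d + (j + 1) * t) from this.1
  induction j with
  | zero => simpa [hu₁] using hu₀
  | succ j ih =>
    have hstep : deg (T * u (j + 1)) = ↑(d + (j + 1) * t) := by
      rw [deg_mul_of_eq hT ih.1]; congr 1; ring
    refine ⟨?_, ?_⟩
    · rw [hrec, deg_sub_eq_left (hstep ▸ ih.2), hstep]; push_cast; ring_nf
    · rw [ih.1]; exact_mod_cast (by push_cast; nlinarith)

lemma s_mul_sInv : s * sInv = 1 := by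
  rw [s, sInv, single_mul_single, Prod.mk_add_mk, add_neg_cancel, add_zero, mul_one]; rfl

lemma A_inv_eq : A⁻¹ = !![sInv, -1; 0, s] := by
  refine Matrix.inv_eq_right_inv ?_
  rw [A, Matrix.mul_fin_two, Matrix.one_fin_two]
  simp [s_mul_sInv, mul_comm]

lemma B_inv_eq : B⁻¹ = !![sInv, 0; y, s] := by
  refine Matrix.inv_eq_right_inv ?_
  rw [B, Matrix.mul_fin_two, Matrix.one_fin_two]
  simp [s_mul_sInv, mul_comm]

lemma B_mul_A_inv_eq : B * A⁻¹ = !![1, -s; -(sInv * y), y + 1] := by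
  rw [A_inv_eq, B, Matrix.mul_fin_two]
  simp [s_mul_sInv, mul_comm]

lemma B_inv_mul_A_eq : B⁻¹ * A = !![1, sInv; s * y, y + 1] := by
  rw [B_inv_eq, A, Matrix.mul_fin_two]
  simp [s_mul_sInv, mul_comm, add_comm]

lemma det_B_mul_A_inv : (B * A⁻¹).det = 1 := by
  rw [B_mul_A_inv_eq, Matrix.det_fin_two_of]; linear_combination (-y) * s_mul_sInv

lemma det_B_inv_mul_A : (B⁻¹ * A).det = 1 := by
  rw [B_inv_mul_A_eq, Matrix.det_fin_two_of]; linear_combination (-y) * s_mul_sInv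

lemma trace_B_mul_A_inv : (B * A⁻¹).trace = y + 2 := by
  rw [B_mul_A_inv_eq, Matrix.trace_fin_two_of]; ring

lemma trace_B_inv_mul_A : (B⁻¹ * A).trace = y + 2 := by
  rw [B_inv_mul_A_eq, Matrix.trace_fin_two_of]; ring

/-- The matrix `W = ρ(w_m)`. -/
def rhoWord (m : ℕ) : Matrix (Fin 2) (Fin 2) R2 := (B * A⁻¹) ^ m * (B⁻¹ * A) ^ m

def rileyForm (M : Matrix (Fin 2) (Fin 2) R2) : R2 := M 0 0 + (sInv - s) * M 0 1

def chebS (n : ℤ) : R2 := (Chebyshev.S R2 n).eval (y + 2)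

lemma chebS_sq_add_chebS_sq (n : ℤ) :
    chebS (n - 1) ^ 2 + chebS n ^ 2 - (y + 2) * chebS (n - 1) * chebS n = 1 := by
  simpa [chebS] using congrArg (eval (y + 2)) (Chebyshev.S_sq_add_S_sq R2 (n - 1))

lemma rhoWord_succ (n : ℕ) :
    rhoWord (n + 1) = chebS n ^ 2 • (B * A⁻¹ * (B⁻¹ * A)) -
      (chebS n * chebS (n - 1)) • (B * A⁻¹ + B⁻¹ * A) + chebS (n - 1) ^ 2 • 1 := by
  rw [rhoWord, Matrix.pow_succ_mul_pow_succ_of_trace_eq det_B_mul_A_inv det_B_inv_mul_A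
    (by rw [trace_B_mul_A_inv, trace_B_inv_mul_A]), trace_B_mul_A_inv]
  rfl

lemma trace_rhoWord_succ (n : ℕ) :
    (rhoWord (n + 1)).trace = 2 - chebS n ^ 2 * y * (s ^ 2 - (y + 2 - sInv ^ 2)) := by
  rw [rhoWord_succ, Matrix.trace_add, Matrix.trace_sub, Matrix.trace_smul, Matrix.trace_smul,
    Matrix.trace_smul, Matrix.trace_add, Matrix.trace_one, trace_B_mul_A_inv, trace_B_inv_mul_A,
    B_mul_A_inv_eq, B_inv_mul_A_eq, Matrix.mul_fin_two, Matrix.trace_fin_two_of]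
  simp only [Fintype.card_fin, smul_eq_mul, Nat.cast_ofNat]
  linear_combination 2 * chebS_sq_add_chebS_sq n

lemma rileyForm_rhoWord_succ (n : ℕ) :
    rileyForm (rhoWord (n + 1)) =
      1 + chebS n * (chebS n - chebS (n - 1)) * (s ^ 2 - (y + 2 - sInv ^ 2)) := by
  simp only [rileyForm, rhoWord_succ, Matrix.add_apply, Matrix.sub_apply, Matrix.smul_apply,
    Matrix.mul_apply, Fin.sum_univ_two, Matrix.one_apply_eq, Matrix.one_apply_ne zero_ne_one,
    B_mul_A_inv_eq, B_inv_mul_A_eq, Matrix.of_apply, Matrix.cons_val_zero, Matrix.cons_val_one,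
    smul_eq_mul]
  linear_combination (2 * chebS n * chebS (n - 1) - (y + 2) * chebS n ^ 2) * s_mul_sInv +
    chebS_sq_add_chebS_sq n

lemma deg_y_add_two : deg (y + 2) = ((1 : ℤ) : WithBot ℤ) := by
  rw [deg_add_eq_left, deg_y]
  rw [deg_y, deg_ofNat]; exact WithBot.coe_lt_coe.2 one_pos

lemma deg_chebS (n : ℕ) : deg (chebS n) = (n : ℤ) := by
  cases n with
  | zero => simp [chebS, deg_one]
  | succ n =>
    have h := deg_eq_of_recurrence (u := fun j : ℕ => chebS j) one_pos deg_y_add_two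
      (by simp only [Nat.cast_one, chebS, Chebyshev.S_one, eval_X]; exact deg_y_add_two)
      (by simp [chebS, deg_one]) (fun j => by simp [chebS]) n
    rw [h]; congr 1; push_cast; ring

lemma deg_chebS_sub_one_lt (n : ℕ) : deg (chebS (n - 1)) < (n : ℤ) := by
  cases n with
  | zero => simp [chebS, deg]
  | succ n =>
    rw [Nat.cast_succ, add_sub_cancel_right, deg_chebS]
    exact WithBot.coe_lt_coe.2 (by omega)

lemma deg_correction : deg (s ^ 2 - (y + 2 - sInv ^ 2)) = ((2 : ℤ) : WithBot ℤ) := by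
  have h : deg (y + 2 - sInv ^ 2) = ((1 : ℤ) : WithBot ℤ) := by
    rw [deg_sub_eq_left, deg_y_add_two]
    rw [deg_y_add_two, deg_pow_of_eq deg_sInv]; exact WithBot.coe_lt_coe.2 (by norm_num)
  rw [deg_sub_eq_left, deg_pow_of_eq deg_s]
  · rfl
  · rw [h, deg_pow_of_eq deg_s]; exact WithBot.coe_lt_coe.2 (by norm_num)

lemma deg_trace_rhoWord_succ (n : ℕ) :
    deg (rhoWord (n + 1)).trace = ((2 * n + 3 : ℤ) : WithBot ℤ) := by
  have h : deg (chebS n ^ 2 * y * (s ^ 2 - (y + 2 - sInv ^ 2))) =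
      ((2 * n + 3 : ℤ) : WithBot ℤ) := by
    rw [deg_mul_of_eq (deg_mul_of_eq (deg_pow_of_eq (deg_chebS n) 2) deg_y) deg_correction]
    exact congrArg _ (by push_cast; ring)
  rw [trace_rhoWord_succ, deg_sub_eq_right, h]
  rw [h, deg_ofNat]; exact WithBot.coe_lt_coe.2 (by omega)

lemma deg_rileyForm_rhoWord_succ (n : ℕ) :
    deg (rileyForm (rhoWord (n + 1))) = ((2 * n + 2 : ℤ) : WithBot ℤ) := by
  have hdiff : deg (chebS n - chebS (n - 1)) = (n : ℤ) := by
    rw [deg_sub_eq_left, deg_chebS]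
    rw [deg_chebS]; exact deg_chebS_sub_one_lt n
  have h : deg (chebS n * (chebS n - chebS (n - 1)) * (s ^ 2 - (y + 2 - sInv ^ 2))) =
      ((2 * n + 2 : ℤ) : WithBot ℤ) := by
    rw [deg_mul_of_eq (deg_mul_of_eq (deg_chebS n) hdiff) deg_correction]
    congr 1; ring
  rw [rileyForm_rhoWord_succ, deg_add_eq_right, h]
  rw [h, deg_one]; exact WithBot.coe_lt_coe.2 (by omega)

lemma det_rhoWord (m : ℕ) : (rhoWord m).det = 1 := by
  rw [rhoWord, Matrix.det_mul, Matrix.det_pow, Matrix.det_pow, det_B_mul_A_inv, det_B_inv_mul_A,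
    one_pow, one_mul]

lemma rileyForm_pow_add_two {M : Matrix (Fin 2) (Fin 2) R2} (hM : M.det = 1) (j : ℕ) :
    rileyForm (M ^ (j + 2)) = M.trace * rileyForm (M ^ (j + 1)) - rileyForm (M ^ j) := by
  rw [Matrix.pow_add_two_of_det_eq_one hM]
  simp only [rileyForm, Matrix.sub_apply, Matrix.smul_apply, smul_eq_mul]
  ring

/-- For `k = 2m` (`m ≥ 1`) and `q ≥ 1`, the total degree of the Riley polynomial
`φ_{2m,q}` of `J(2m,2q)` equals `(2m+1)q - 1`. -/
theorem stmt_8 (m q : ℕ) (hm : 1 ≤ m) (hq : 1 ≤ q) :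
    deg (((((B * A⁻¹) ^ m * (B⁻¹ * A) ^ m) ^ q) 0 0) +
        (sInv - s) * ((((B * A⁻¹) ^ m * (B⁻¹ * A) ^ m) ^ q) 0 1)) =
      ((2 * (m : ℤ) + 1) * (q : ℤ) - 1 : ℤ) := by
  obtain ⟨n, rfl⟩ : ∃ n, m = n + 1 := ⟨m - 1, by omega⟩
  obtain ⟨l, rfl⟩ : ∃ l, q = l + 1 := ⟨q - 1, by omega⟩
  change deg (rileyForm (rhoWord (n + 1) ^ (l + 1))) = _
  have hφ₀ : rileyForm (rhoWord (n + 1) ^ 0) = 1 := by simp [rileyForm]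
  rw [deg_eq_of_recurrence (u := fun j => rileyForm (rhoWord (n + 1) ^ j)) (by omega)
    (deg_trace_rhoWord_succ n) (by rw [pow_one]; exact deg_rileyForm_rhoWord_succ n)
    (by rw [hφ₀, deg_one]; exact WithBot.coe_lt_coe.2 (by omega))
    (rileyForm_pow_add_two (det_rhoWord _)) l]
  congr 1; push_cast; ring
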